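/- arXiv:1406.5479 — 4 statements merged into one kernel-verified Lean document; each statement's English description precedes it below -/
import Mathlib

section
/- Let G be a group equipped with a linear order ≤ making it a linearly ordered group. Then the following are equivalent: (a) G is nontrivial and satisfies the common-power axiom; (b) there exist a nontrivial additive subgroup H of the rational numbers ℚ and a group isomorphism from G (written multiplicatively) onto H (written additively) which is simultaneously an order isomorphism, where H carries the order induced from ℚ. -/
/-!
Fix `a > 1`. Every `g` can be written as `g = z ^ m` with `a = z ^ n` (`n : ℕ`, `m : ℤ`, `1 ≤ z`),
and the exponent `m / n` does not depend on the root `z`: two such roots are themselves powers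
of a common `t > 1`, whose integer powers are pairwise distinct. Computing in a common root also
shows that `g ↦ m / n` is additive; it is positive on elements `> 1`, hence strictly monotone, so
it identifies `G` with a subgroup of `ℚ`.
Conversely, two nonnegative elements `a / d`, `b / d` of a subgroup of `ℚ` are natural multiples
of `gcd a b / d`, which lies in the subgroup by Bézout.
-/

def HasCommonPowers (G : Type*) [Monoid G] [LE G] : Prop :=
  ∀ x y : G, 1 ≤ x → 1 ≤ y → ∃ z : G, 1 ≤ z ∧ ∃ n m : ℕ, x = z ^ n ∧ y = z ^ m

/-- `g = a ^ r`, witnessed by a common root `z` of `a` and `g`. -/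
def IsPowRatio {G : Type*} [Group G] [LE G] (a g : G) (r : ℚ) : Prop :=
  ∃ z : G, 1 ≤ z ∧ ∃ (n : ℕ) (m : ℤ), a = z ^ n ∧ g = z ^ m ∧ r = m / n

lemma map_one_of_map_mul_eq_add {M R : Type*} [Monoid M] [Ring R] {f : M → R}
    (hf : ∀ x y, f (x * y) = f x + f y) : f 1 = 0 := by
  simpa using hf 1 1

lemma map_pow_of_map_mul_eq_add {M R : Type*} [Monoid M] [Ring R] {f : M → R}
    (hf : ∀ x y, f (x * y) = f x + f y) (z : M) (n : ℕ) : f (z ^ n) = n * f z := by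
  induction n with
  | zero => simpa using map_one_of_map_mul_eq_add hf
  | succ k ih => rw [pow_succ, hf, ih, Nat.cast_succ, add_one_mul]

lemma Rat.exists_eq_natCast_div_of_nonneg {p : ℚ} (hp : 0 ≤ p) :
    ∃ a d : ℕ, d ≠ 0 ∧ p = a / d := by
  refine ⟨p.num.toNat, p.den, p.den_nz, ?_⟩
  have hnum : (p.num.toNat : ℚ) = p.num := by
    exact_mod_cast Int.toNat_of_nonneg (Rat.num_nonneg.mpr hp)
  rw [hnum, Rat.num_div_den]

lemma Rat.exists_eq_natCast_div_and_eq_natCast_div {p q : ℚ} (hp : 0 ≤ p) (hq : 0 ≤ q) :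
    ∃ a b d : ℕ, p = a / d ∧ q = b / d := by
  obtain ⟨a, d, hd, rfl⟩ := Rat.exists_eq_natCast_div_of_nonneg hp
  obtain ⟨b, e, he, rfl⟩ := Rat.exists_eq_natCast_div_of_nonneg hq
  refine ⟨a * e, b * d, d * e, ?_, ?_⟩ <;> push_cast <;> field_simp

lemma AddSubgroup.exists_nonneg_common_divisor_rat (H : AddSubgroup ℚ) {p q : ℚ}
    (hpH : p ∈ H) (hqH : q ∈ H) (hp : 0 ≤ p) (hq : 0 ≤ q) :
    ∃ r ∈ H, 0 ≤ r ∧ ∃ n m : ℕ, p = n * r ∧ q = m * r := by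
  obtain ⟨a, b, d, rfl, rfl⟩ := Rat.exists_eq_natCast_div_and_eq_natCast_div hp hq
  have hbezout : (a.gcd b : ℚ) / d = a.gcdA b • ((a : ℚ) / d) + a.gcdB b • ((b : ℚ) / d) := by
    have h : ((a.gcd b : ℤ) : ℚ) = ((a * a.gcdA b + b * a.gcdB b : ℤ) : ℚ) :=
      congrArg _ (Nat.gcd_eq_gcd_ab a b)
    push_cast at h
    rw [h, zsmul_eq_mul, zsmul_eq_mul]
    ring
  refine ⟨(a.gcd b : ℚ) / d, hbezout ▸ add_mem (zsmul_mem hpH _) (zsmul_mem hqH _),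
    by positivity, a / a.gcd b, b / a.gcd b, ?_, ?_⟩
  · rw [← mul_div_assoc, ← Nat.cast_mul, Nat.div_mul_cancel (Nat.gcd_dvd_left a b)]
  · rw [← mul_div_assoc, ← Nat.cast_mul, Nat.div_mul_cancel (Nat.gcd_dvd_right a b)]

lemma mulLeftMono_of_mono {M : Type*} [Monoid M] [LE M]
    (mono : ∀ a b c d : M, a ≤ b → c * a * d ≤ c * b * d) :
    MulLeftMono M :=
  ⟨fun c a b h => by simpa using mono a b c 1 h⟩

lemma mulRightMono_of_mono {M : Type*} [Monoid M] [LE M]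
    (mono : ∀ a b c d : M, a ≤ b → c * a * d ≤ c * b * d) :
    MulRightMono M :=
  ⟨fun d a b h => by simpa using mono a b 1 d h⟩

section OrderedGroup

variable {G : Type*} [Group G] [LinearOrder G]

lemma isPowRatio_self {a : G} (ha : 1 ≤ a) : IsPowRatio a a 1 :=
  ⟨a, ha, 1, 1, by simp, by simp, by simp⟩

variable [MulLeftMono G]

lemma zpow_right_injective_of_one_lt {t : G} (ht : 1 < t) :
    Function.Injective fun n : ℤ => t ^ n :=
  (strictMono_int_of_lt_succ fun n => by
    rw [zpow_add_one]; exact lt_mul_of_one_lt_right' (t ^ n) ht).injective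

lemma exists_isPowRatio (cp : HasCommonPowers G) {a : G} (ha : 1 ≤ a) (g : G) :
    ∃ r, IsPowRatio a g r := by
  rcases le_total 1 g with hg | hg
  · obtain ⟨z, hz, n, m, rfl, rfl⟩ := cp a g ha hg
    exact ⟨m / n, z, hz, n, m, rfl, by simp, by simp⟩
  · obtain ⟨z, hz, n, m, rfl, hm⟩ := cp a g⁻¹ ha (one_le_inv'.mpr hg)
    exact ⟨-m / n, z, hz, n, -m, rfl, by rw [zpow_neg, zpow_natCast, ← hm, inv_inv],
      by push_cast; ring⟩

lemma IsPowRatio.pos {a g : G} {r : ℚ} (h : IsPowRatio a g r) (ha : 1 < a) (hg : 1 < g) :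
    0 < r := by
  obtain ⟨z, hz, n, m, rfl, rfl, rfl⟩ := h
  have hn : 0 < n := Nat.pos_of_ne_zero (by rintro rfl; simp at ha)
  have hm : 0 < m := by
    by_contra! hm
    have : 1 ≤ (z ^ m)⁻¹ := by
      rw [← zpow_neg]; exact one_le_zpow hz (neg_nonneg.mpr hm)
    exact (one_le_inv'.mp this).not_gt hg
  positivity

lemma IsPowRatio.exists_common_base (cp : HasCommonPowers G) {a g h : G} {r s : ℚ}
    (hg : IsPowRatio a g r) (hh : IsPowRatio a h s) (ha : 1 < a) :
    ∃ t : G, ∃ N : ℕ, ∃ M M' : ℤ,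
      1 < t ∧ a = t ^ N ∧ g = t ^ M ∧ h = t ^ M' ∧ r = M / N ∧ s = M' / N := by
  obtain ⟨z, hz, n, m, rfl, rfl, rfl⟩ := hg
  obtain ⟨w, hw, n', m', haw, rfl, rfl⟩ := hh
  obtain ⟨t, ht, p, q, rfl, rfl⟩ := cp z w hz hw
  simp only [← pow_mul] at haw ha ⊢
  have ht1 : 1 < t := ht.lt_of_ne (by rintro rfl; simp at ha)
  have hpn : p * n ≠ 0 := by rintro h; simp [h] at ha
  have hN : p * n = q * n' := (pow_right_strictMono' ht1).injective haw
  have hp : (p : ℚ) ≠ 0 := by exact_mod_cast left_ne_zero_of_mul hpn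
  have hq : (q : ℚ) ≠ 0 := by exact_mod_cast left_ne_zero_of_mul (hN ▸ hpn)
  refine ⟨t, p * n, p * m, q * m', ht1, rfl, by rw [zpow_mul, zpow_natCast],
    by rw [zpow_mul, zpow_natCast], ?_, ?_⟩
  · push_cast
    rw [mul_div_mul_left _ _ hp]
  · rw [hN]
    push_cast
    rw [mul_div_mul_left _ _ hq]

lemma IsPowRatio.unique (cp : HasCommonPowers G) {a g : G} {r s : ℚ}
    (hr : IsPowRatio a g r) (hs : IsPowRatio a g s) (ha : 1 < a) : r = s := by
  obtain ⟨t, N, M, M', ht, -, hM, hM', rfl, rfl⟩ := hr.exists_common_base cp hs ha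
  rw [zpow_right_injective_of_one_lt ht (hM.symm.trans hM')]

lemma IsPowRatio.mul (cp : HasCommonPowers G) {a g h : G} {r s : ℚ}
    (hg : IsPowRatio a g r) (hh : IsPowRatio a h s) (ha : 1 < a) :
    IsPowRatio a (g * h) (r + s) := by
  obtain ⟨t, N, M, M', ht, haN, rfl, rfl, rfl, rfl⟩ := hg.exists_common_base cp hh ha
  exact ⟨t, ht.le, N, M + M', haN, (zpow_add t M M').symm, by push_cast; rw [add_div]⟩

variable [MulRightMono G]

theorem HasCommonPowers.exists_strictMono_rat (cp : HasCommonPowers G) (hnt : ∃ x : G, x ≠ 1) :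
    ∃ F : G → ℚ, (∀ x y, F (x * y) = F x + F y) ∧ StrictMono F ∧ ∃ a, F a ≠ 0 := by
  obtain ⟨a, ha⟩ : ∃ a : G, 1 < a := by
    obtain ⟨x, hx⟩ := hnt
    rcases hx.lt_or_gt with hx | hx
    · exact ⟨x⁻¹, one_lt_inv'.mpr hx⟩
    · exact ⟨x, hx⟩
  choose F hF using exists_isPowRatio cp ha.le
  have hF_mul : ∀ x y, F (x * y) = F x + F y := fun x y =>
    (hF (x * y)).unique cp ((hF x).mul cp (hF y) ha) ha
  refine ⟨F, hF_mul, fun x y hxy => ?_, a, ?_⟩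
  · have hpos : 0 < F (y * x⁻¹) := (hF _).pos ha (lt_mul_inv_iff_lt.mpr hxy)
    calc F x < F (y * x⁻¹) + F x := by linarith
      _ = F y := by rw [← hF_mul, inv_mul_cancel_right]
  · rw [(hF a).unique cp (isPowRatio_self ha.le) ha]
    exact one_ne_zero

end OrderedGroup

lemma exists_addSubgroup_equiv_of_strictMono {G : Type*} [Group G] [LinearOrder G] (F : G → ℚ)
    (hF_mul : ∀ x y, F (x * y) = F x + F y) (hF : StrictMono F) (hne : ∃ a, F a ≠ 0) :
    ∃ H : AddSubgroup ℚ, H ≠ ⊥ ∧ ∃ e : G ≃ H,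
      (∀ x y : G, (e (x * y) : ℚ) = (e x : ℚ) + (e y : ℚ)) ∧
      (∀ x y : G, x ≤ y ↔ (e x : ℚ) ≤ (e y : ℚ)) := by
  let φ : Additive G →+ ℚ := AddMonoidHom.mk' (F ∘ Additive.toMul) hF_mul
  let e : G → φ.range := fun g => φ.rangeRestrict (Additive.ofMul g)
  have he_inj : Function.Injective e := fun x y h => hF.injective (congrArg Subtype.val h)
  have he_surj : Function.Surjective e :=
    φ.rangeRestrict_surjective.comp Additive.ofMul.surjective
  obtain ⟨a, ha⟩ := hne
  refine ⟨φ.range, AddSubgroup.ne_bot_iff_exists_ne_zero.mpr ⟨e a, ?_⟩,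
    Equiv.ofBijective e ⟨he_inj, he_surj⟩, hF_mul, fun x y => hF.le_iff_le.symm⟩
  exact fun h => ha (congrArg Subtype.val h)

lemma exists_ne_one_of_equiv_addSubgroup {G : Type*} [Group G] {H : AddSubgroup ℚ} (hH : H ≠ ⊥)
    (e : G ≃ H) (he_mul : ∀ x y : G, (e (x * y) : ℚ) = (e x : ℚ) + (e y : ℚ)) :
    ∃ x : G, x ≠ 1 := by
  obtain ⟨q, hq⟩ := AddSubgroup.ne_bot_iff_exists_ne_zero.mp hH
  refine ⟨e.symm q, fun h => hq (Subtype.ext ?_)⟩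
  rw [← e.apply_symm_apply q, h, map_one_of_map_mul_eq_add (f := fun g => (e g : ℚ)) he_mul]
  rfl

lemma hasCommonPowers_of_equiv_addSubgroup {G : Type*} [Group G] [LE G] {H : AddSubgroup ℚ}
    (e : G ≃ H) (he_mul : ∀ x y : G, (e (x * y) : ℚ) = (e x : ℚ) + (e y : ℚ))
    (he_le : ∀ x y : G, x ≤ y ↔ (e x : ℚ) ≤ (e y : ℚ)) : HasCommonPowers G := by
  have one_le_iff : ∀ x, 1 ≤ x ↔ 0 ≤ (e x : ℚ) := fun x => by
    rw [he_le, map_one_of_map_mul_eq_add (f := fun g => (e g : ℚ)) he_mul]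
  intro x y hx hy
  obtain ⟨r, hrH, hr, n, m, hn, hm⟩ := H.exists_nonneg_common_divisor_rat (e x).2 (e y).2
    ((one_le_iff x).mp hx) ((one_le_iff y).mp hy)
  set z := e.symm ⟨r, hrH⟩
  have hz : (e z : ℚ) = r := by simp [z]
  have he_pow := map_pow_of_map_mul_eq_add (f := fun g => (e g : ℚ)) he_mul z
  refine ⟨z, (one_le_iff z).mpr (hz ▸ hr), n, m,
    e.injective (Subtype.ext ?_), e.injective (Subtype.ext ?_)⟩
  · rw [he_pow, hz, hn]
  · rw [he_pow, hz, hm]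

/-- A nontrivial linearly ordered group satisfying the common-power axiom
is, equivalently, order-isomorphic (via a group isomorphism) to a nontrivial additive
subgroup of `ℚ`. -/
theorem stmt0 {G : Type*} [Group G] [LinearOrder G]
    (mono : ∀ a b c d : G, a ≤ b → c * a * d ≤ c * b * d) :
    ((∃ x : G, x ≠ 1) ∧
      (∀ x y : G, 1 ≤ x → 1 ≤ y →
        ∃ z : G, 1 ≤ z ∧ ∃ n m : ℕ, x = z ^ n ∧ y = z ^ m))
    ↔
    (∃ H : AddSubgroup ℚ, H ≠ ⊥ ∧ ∃ e : G ≃ H,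
      (∀ x y : G, (e (x * y) : ℚ) = (e x : ℚ) + (e y : ℚ)) ∧
      (∀ x y : G, x ≤ y ↔ (e x : ℚ) ≤ (e y : ℚ))) := by
  have := mulLeftMono_of_mono mono
  have := mulRightMono_of_mono mono
  constructor
  · rintro ⟨hnt, cp⟩
    obtain ⟨F, hF_mul, hF_mono, hF_ne⟩ := HasCommonPowers.exists_strictMono_rat cp hnt
    exact exists_addSubgroup_equiv_of_strictMono F hF_mul hF_mono hF_ne
  · rintro ⟨H, hH, e, he_mul, he_le⟩
    exact ⟨exists_ne_one_of_equiv_addSubgroup hH e he_mul,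
      hasCommonPowers_of_equiv_addSubgroup e he_mul he_le⟩
end

section
/- Every linearly ordered group G satisfying the common-power axiom is archimedean: for all x, y ∈ G with 1 < y there exists a natural number n such that x ≤ y^n. -/
theorem pow_le_pow_pow_of_one_le {M : Type*} [Monoid M] [Preorder M] [MulLeftMono M] {z : M}
    (hz : 1 ≤ z) {m : ℕ} (hm : m ≠ 0) (n : ℕ) : z ^ n ≤ (z ^ m) ^ n := by
  rw [← pow_mul]
  exact pow_le_pow_right' hz (Nat.le_mul_of_pos_left n (Nat.pos_of_ne_zero hm))

/-- Every linearly ordered group satisfying the common-power axiom is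
archimedean. -/
theorem stmt3 {G : Type*} [Group G] [LinearOrder G]
    (mono : ∀ a b c d : G, a ≤ b → c * a * d ≤ c * b * d)
    (hcp : ∀ x y : G, 1 ≤ x → 1 ≤ y →
      ∃ z : G, 1 ≤ z ∧ ∃ n m : ℕ, x = z ^ n ∧ y = z ^ m) :
    ∀ x y : G, 1 < y → ∃ n : ℕ, x ≤ y ^ n := by
  intro x y hy
  have : MulLeftMono G := ⟨fun c a b h => by simpa only [mul_one] using mono a b c 1 h⟩
  rcases le_or_gt x 1 with hx | hx
  · exact ⟨0, by simpa only [pow_zero] using hx⟩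
  obtain ⟨z, hz, n, m, rfl, rfl⟩ := hcp x y hx.le hy.le
  have hm : m ≠ 0 := by
    rintro rfl
    exact hy.ne' (pow_zero z)
  exact ⟨n, pow_le_pow_pow_of_one_le hz hm n⟩
end

section
/- Let G be a partially oriented groupoid with non-triviality predicate and let n ≥ 1. Then the map sending a homomorphism F : X_n → G of such structures to the tuple (F(ξ_0), …, F(ξ_{n−1})) — where ξ_i denotes the arrow of X_n from i to i+1 given by the integer 1 — is a bijection from the set of homomorphisms X_n → G onto the set of positive non-trivial n-loops in G (the loop having objects o_i = F(i) and arrows x_i = F(ξ_i)). -/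
open CategoryTheory

/-- The groupoid `X_n`: objects are elements of `ℤ/nℤ`, arrows `i ⟶ j` are integers
`m` with `m ≡ j - i (mod n)`, composition is addition of integers, identities are `0`
and inverses are negation. -/
instance XnGroupoid (n : ℕ) : Groupoid (ZMod n) where
  Hom i j := {m : ℤ // (m : ZMod n) = j - i}
  id i := ⟨0, by simp⟩
  comp {i j k} f g := ⟨f.1 + g.1, by push_cast [f.2, g.2]; ring⟩
  id_comp f := Subtype.ext (by simp)
  comp_id f := Subtype.ext (by simp)
  assoc f g h := Subtype.ext (by simp [add_assoc])
  inv {i j} f := ⟨-f.1, by push_cast [f.2]; ring⟩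
  inv_comp f := Subtype.ext (by simp)
  comp_inv f := Subtype.ext (by simp)

/-- The generating arrow `ξ_i : i ⟶ i + 1` of `X_n`, given by the integer `1`. -/
def xi (n : ℕ) (i : ZMod n) : i ⟶ (i + 1) := ⟨1, by push_cast; ring⟩

/-- A partially oriented groupoid with non-triviality predicate: a positivity
predicate `P` on arrows containing all identities, closed under composition and such
that `P f` and `P f⁻¹` force `f` to be an identity; together with a predicate `T` on
arrows holding only for endomorphisms, never for identities, stable under nonzero
integer powers and under rotation of composites. -/
structure OrientedTStruct (G : Type*) [Groupoid G] where
  P : ∀ {a b : G}, (a ⟶ b) → Prop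
  T : ∀ {a b : G}, (a ⟶ b) → Prop
  P_id : ∀ a : G, P (𝟙 a)
  P_comp : ∀ {a b c : G} (f : a ⟶ b) (g : b ⟶ c), P f → P g → P (f ≫ g)
  P_antisym : ∀ {a b : G} (f : a ⟶ b), P f → P (Groupoid.inv f) →
    ∃ h : a = b, f = eqToHom h
  T_endo : ∀ {a b : G} (f : a ⟶ b), T f → a = b
  T_not_id : ∀ a : G, ¬ T (𝟙 a)
  T_pow : ∀ {a : G} (f : CategoryTheory.End a) (k : ℤ), k ≠ 0 → T f → T (f ^ k)
  T_rot : ∀ {a b : G} (f : a ⟶ b) (g : b ⟶ a), T (f ≫ g) → T (g ≫ f)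

/-- The value of an integer power of an endomorphism of `X_n`. -/
lemma Xn_pow_val (n : ℕ) (i : ZMod n) (f : CategoryTheory.End i) (k : ℤ) :
    ((f ^ k : CategoryTheory.End i)).1 = k * f.1 := by
  have hnat : ∀ m : ℕ, ((f ^ m : CategoryTheory.End i)).1 = (m : ℤ) * f.1 := by
    intro m
    induction m with
    | zero =>
        rw [pow_zero]
        show (0 : ℤ) = ((0 : ℕ) : ℤ) * f.1
        simp
    | succ m ih =>
        rw [pow_succ]
        show f.1 + ((f ^ m : CategoryTheory.End i)).1 = ((m + 1 : ℕ) : ℤ) * f.1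
        rw [ih]; push_cast; ring
  rcases k with p | p
  · rw [Int.ofNat_eq_coe, zpow_natCast]
    exact hnat p
  · rw [zpow_negSucc]
    show -((f ^ (p + 1) : CategoryTheory.End i)).1 = Int.negSucc p * f.1
    rw [hnat]
    rw [Int.negSucc_eq]
    push_cast; ring

/-- The canonical partially oriented groupoid structure with non-triviality predicate
on `X_n`: an arrow `m` is positive iff `m ≥ 0`, and an arrow `m : i ⟶ j` is
non-trivial iff `i = j` and `m ≠ 0`. -/
def XnTStruct (n : ℕ) : OrientedTStruct (ZMod n) where
  P f := 0 ≤ f.1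
  T {i j} f := i = j ∧ f.1 ≠ 0
  P_id a := le_refl 0
  P_comp f g hf hg := add_nonneg hf hg
  P_antisym := by
    intro i j f hf hinv
    have hneg : (0 : ℤ) ≤ -f.1 := hinv
    have hm : f.1 = 0 := le_antisymm (by linarith) hf
    have hij : i = j := by
      have h2 := f.2
      rw [hm] at h2
      push_cast at h2
      exact (eq_of_sub_eq_zero h2.symm).symm
    subst hij
    refine ⟨rfl, Subtype.ext ?_⟩
    show f.1 = (0 : ℤ)
    exact hm
  T_endo f h := h.1
  T_not_id a := by
    rintro ⟨-, h⟩
    exact h rfl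
  T_pow := by
    rintro a f k hk ⟨-, hf⟩
    refine ⟨rfl, ?_⟩
    rw [Xn_pow_val]
    exact mul_ne_zero hk hf
  T_rot := by
    rintro a b f g ⟨-, h⟩
    refine ⟨rfl, ?_⟩
    have h' : f.1 + g.1 ≠ 0 := h
    show g.1 + f.1 ≠ 0
    omega

/-- A homomorphism of partially oriented groupoids with non-triviality predicate:
a functor preserving both `P` and `T`. -/
structure OrientedTHom {G H : Type*} [Groupoid G] [Groupoid H]
    (S : OrientedTStruct G) (S' : OrientedTStruct H) where
  F : G ⥤ H
  mapP : ∀ {a b : G} (f : a ⟶ b), S.P f → S'.P (F.map f)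
  mapT : ∀ {a b : G} (f : a ⟶ b), S.T f → S'.T (F.map f)

/-- A "raw loop" of length `n` in a groupoid `G`: objects indexed by `ℤ/nℤ` and
arrows `x i : o i ⟶ o (i+1)`. -/
structure Loop (G : Type*) [Groupoid G] (n : ℕ) where
  o : ZMod n → G
  x : ∀ i : ZMod n, o i ⟶ o (i + 1)

namespace Loop

variable {G : Type*} [Groupoid G] {n : ℕ}

/-- The composite of `d` consecutive arrows of the loop, starting at index `s`. -/
def seg (L : Loop G n) (s : ℕ) : ∀ d : ℕ, (L.o (s : ZMod n) ⟶ L.o ((s + d : ℕ) : ZMod n))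
  | 0 => eqToHom (congrArg L.o (by push_cast; ring))
  | d + 1 => seg L s d ≫ L.x ((s + d : ℕ) : ZMod n) ≫
      eqToHom (congrArg L.o (by push_cast; ring))

/-- The total composite `x_{n-1} ∘ ⋯ ∘ x_1 ∘ x_0 : o 0 ⟶ o 0` of a loop. -/
def total (L : Loop G n) : L.o 0 ⟶ L.o 0 :=
  eqToHom (congrArg L.o (by push_cast; ring)) ≫ L.seg 0 n ≫
    eqToHom (congrArg L.o (by simp [ZMod.natCast_self]))

end Loop

/-- A loop is a positive non-trivial `n`-loop when all its arrows are positive and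
its total composite satisfies the non-triviality predicate `T`. -/
def IsPosLoop {G : Type*} [Groupoid G] (S : OrientedTStruct G) {n : ℕ}
    (L : Loop G n) : Prop :=
  (∀ i, S.P (L.x i)) ∧ S.T L.total

/-!
A functor `F : X_n ⥤ G` is determined by the arrows `F ξ_i`: an arrow of value `k ≥ 0` is the
composite of `k` consecutive `ξ`'s, and the remaining arrows are inverses of these. Conversely, a
loop with total composite `c` extends to a functor sending `m : i ⟶ j` to `t_i⁻¹ ≫ c ^ w ≫ t_j`,
where `t_i` is the path of loop arrows from `o 0` to `o i` and `w` is the winding number of `m`.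
On an arrow of value `k ≥ 0` this is again the composite of `k` consecutive loop arrows, so the
functor preserves positivity; a nonzero endomorphism has nonzero winding number, so its image is a
conjugate of a nonzero power of `c` and satisfies `T` because `c` does.
-/

namespace OrientedTStruct

variable {G : Type*} [Groupoid G] (S : OrientedTStruct G)

lemma P_eqToHom {a b : G} (h : a = b) : S.P (eqToHom h) := by
  subst h; exact S.P_id a

lemma T_conj {a b : G} (f : a ⟶ b) (g : End a) (hg : S.T g) :
    S.T (Groupoid.inv f ≫ g ≫ f) :=
  S.T_rot (g ≫ f) (Groupoid.inv f) (by simpa using hg)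

end OrientedTStruct

lemma OrientedTHom.ext {G H : Type*} [Groupoid G] [Groupoid H]
    {S : OrientedTStruct G} {S' : OrientedTStruct H} {A B : OrientedTHom S S'}
    (h : A.F = B.F) : A = B := by
  cases A; cases B; cases h; rfl

namespace XnGroupoid

variable {n : ℕ}

lemma comp_val {i j k : ZMod n} (f : i ⟶ j) (g : j ⟶ k) : (f ≫ g).1 = f.1 + g.1 := rfl

lemma eqToHom_val {i j : ZMod n} (h : i = j) : (eqToHom h).1 = 0 := by
  subst h; rfl

def xiPow (n : ℕ) (i : ZMod n) (k : ℕ) : i ⟶ i + k := ⟨k, by push_cast; ring⟩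

lemma xiPow_succ (i : ZMod n) (k : ℕ) :
    xiPow n i (k + 1) = xiPow n i k ≫ xi n (i + k) ≫ eqToHom (by push_cast; ring) := by
  apply Subtype.ext
  rw [comp_val, comp_val, eqToHom_val]
  show ((k + 1 : ℕ) : ℤ) = k + (1 + 0)
  push_cast; ring

lemma eq_xiPow_comp {i j : ZMod n} (f : i ⟶ j) (k : ℕ) (hk : f.1 = k) (h : i + k = j) :
    f = xiPow n i k ≫ eqToHom h := by
  apply Subtype.ext
  rw [comp_val, eqToHom_val, hk]
  exact (add_zero _).symm

lemma add_eq_of_val_eq {i j : ZMod n} (f : i ⟶ j) (k : ℕ) (hk : f.1 = k) : i + k = j := by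
  have h := f.2
  rw [hk] at h
  push_cast at h
  rw [h]; ring

/-- An arrow `m : i ⟶ j` of `X_n` is `m = n * winding m + (j.val - i.val)`: it runs `winding m`
times around the circle. -/
def winding {i j : ZMod n} (f : i ⟶ j) : ℤ := (f.1 - (j.val - i.val)) / n

variable [NeZero n]

lemma mul_winding {i j : ZMod n} (f : i ⟶ j) : n * winding f = f.1 - (j.val - i.val) := by
  have hdvd : ((f.1 - (j.val - i.val) : ℤ) : ZMod n) = 0 := by
    push_cast [f.2, ZMod.natCast_rightInverse i, ZMod.natCast_rightInverse j]
    ring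
  obtain ⟨u, hu⟩ := (ZMod.intCast_zmod_eq_zero_iff_dvd _ n).1 hdvd
  rw [winding, hu, Int.mul_ediv_cancel_left _ (by exact_mod_cast NeZero.ne n)]

lemma winding_eq_iff {i j : ZMod n} (f : i ⟶ j) (q : ℤ) :
    winding f = q ↔ n * q = f.1 - (j.val - i.val) := by
  rw [← mul_winding, mul_right_inj' (by exact_mod_cast NeZero.ne n)]
  exact eq_comm

lemma winding_id (i : ZMod n) : winding (𝟙 i) = 0 := by
  rw [winding_eq_iff]
  show (n : ℤ) * 0 = 0 - _
  simp

lemma winding_comp {i j k : ZMod n} (f : i ⟶ j) (g : j ⟶ k) :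
    winding (f ≫ g) = winding f + winding g := by
  rw [winding_eq_iff, mul_add, mul_winding, mul_winding, comp_val]
  ring

lemma val_eq_mod_of_val_eq {i j : ZMod n} (f : i ⟶ j) (k : ℕ) (hk : f.1 = k) :
    j.val = (i.val + k) % n := by
  rw [← add_eq_of_val_eq f k hk, ← ZMod.val_natCast, Nat.cast_add, ZMod.natCast_val,
    ZMod.cast_id', id]

lemma winding_of_val_eq {i j : ZMod n} (f : i ⟶ j) (k : ℕ) (hk : f.1 = k) :
    winding f = ((i.val + k) / n : ℕ) := by
  rw [winding_eq_iff, hk, val_eq_mod_of_val_eq f k hk]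
  have := Nat.div_add_mod (i.val + k) n
  omega

end XnGroupoid

open XnGroupoid

namespace Loop

variable {G : Type*} [Groupoid G] {n : ℕ}

lemma x_congr (L : Loop G n) {i i' : ZMod n} (h : i = i') :
    L.x i' = eqToHom (congrArg L.o h.symm) ≫ L.x i ≫ eqToHom (congrArg L.o (by rw [h])) := by
  subst h; simp

def path (L : Loop G n) (i : ZMod n) : ∀ k : ℕ, L.o i ⟶ L.o (i + k)
  | 0 => eqToHom (congrArg L.o (by simp))
  | k + 1 => L.path i k ≫ L.x (i + k) ≫ eqToHom (congrArg L.o (by push_cast; ring))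

lemma path_congr (L : Loop G n) {i i' : ZMod n} (h : i = i') (k : ℕ) :
    L.path i' k = eqToHom (congrArg L.o h.symm) ≫ L.path i k ≫
      eqToHom (congrArg L.o (by rw [h])) := by
  subst h; simp

lemma path_length_congr (L : Loop G n) (i : ZMod n) {k k' : ℕ} (h : k = k') :
    L.path i k = L.path i k' ≫ eqToHom (congrArg L.o (by rw [h])) := by
  subst h; simp

lemma path_add (L : Loop G n) (i : ZMod n) (a b : ℕ) :
    L.path i (a + b) = L.path i a ≫ L.path (i + a) b ≫
      eqToHom (congrArg L.o (by push_cast; ring)) := by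
  induction b with
  | zero => simp [path]
  | succ b ih =>
    show L.path i ((a + b) + 1) = _
    rw [path, ih, path, L.x_congr (show i + a + b = i + ((a + b : ℕ) : ZMod n) by push_cast; ring)]
    simp

lemma P_path (S : OrientedTStruct G) (L : Loop G n) (hP : ∀ i, S.P (L.x i))
    (i : ZMod n) (k : ℕ) : S.P (L.path i k) := by
  induction k with
  | zero => exact S.P_eqToHom _
  | succ k ih => exact S.P_comp _ _ ih (S.P_comp _ _ (hP _) (S.P_eqToHom _))

lemma seg_eq_path (L : Loop G n) (s k : ℕ) :
    L.seg s k = L.path s k ≫ eqToHom (congrArg L.o (by push_cast; ring)) := by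
  induction k with
  | zero => simp [seg, path]
  | succ k ih =>
    rw [seg, ih, path,
      L.x_congr (show (s : ZMod n) + k = ((s + k : ℕ) : ZMod n) by push_cast; ring)]
    simp only [Category.assoc, eqToHom_trans, eqToHom_trans_assoc, eqToHom_refl,
      Category.id_comp]

lemma total_eq_path (L : Loop G n) : L.total = L.path 0 n ≫ eqToHom (congrArg L.o (by simp)) := by
  rw [total, seg_eq_path, L.path_congr (show (0 : ZMod n) = (0 : ℕ) by simp) n]
  simp

lemma path_zero_mul_add (L : Loop G n) (q r : ℕ) :
    L.path 0 (q * n + r) = (End.of L.total ^ q) ≫ L.path 0 r ≫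
      eqToHom (congrArg L.o (by simp)) := by
  induction q with
  | zero =>
    rw [L.path_length_congr 0 (show 0 * n + r = r by ring)]
    show _ = 𝟙 _ ≫ _
    simp
  | succ q ih =>
    rw [L.path_length_congr 0 (show (q + 1) * n + r = n + (q * n + r) by ring), path_add,
      L.path_congr (show (0 : ZMod n) = 0 + n by simp) (q * n + r), ih,
      show End.of L.total ^ (q + 1) = L.total ≫ (End.of L.total ^ q) from pow_succ _ _,
      total_eq_path]
    simp

def ofFunctor (F : ZMod n ⥤ G) : Loop G n := ⟨F.obj, fun i => F.map (xi n i)⟩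

lemma map_xiPow (F : ZMod n ⥤ G) (i : ZMod n) (k : ℕ) :
    F.map (xiPow n i k) = (ofFunctor F).path i k := by
  induction k with
  | zero =>
    rw [show xiPow n i 0 = eqToHom (by simp) from Subtype.ext (eqToHom_val _).symm, eqToHom_map]
    rfl
  | succ k ih =>
    rw [xiPow_succ, F.map_comp, F.map_comp, ih, eqToHom_map]
    rfl

lemma map_of_val_eq (F : ZMod n ⥤ G) {i j : ZMod n} (f : i ⟶ j) (k : ℕ) (hk : f.1 = k) :
    F.map f =
      (ofFunctor F).path i k ≫ eqToHom (congrArg (ofFunctor F).o (add_eq_of_val_eq f k hk)) := by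
  conv_lhs => rw [eq_xiPow_comp f k hk (add_eq_of_val_eq f k hk)]
  rw [F.map_comp, map_xiPow, eqToHom_map]
  rfl

lemma total_ofFunctor (F : ZMod n ⥤ G) :
    (ofFunctor F).total = F.map ⟨n, by simp⟩ := by
  rw [total_eq_path, map_of_val_eq F _ n rfl]

variable [NeZero n]

def fromZero (L : Loop G n) (i : ZMod n) : L.o 0 ⟶ L.o i :=
  L.path 0 i.val ≫ eqToHom (congrArg L.o (by simp))

/-- An arrow goes to the power of the total composite given by its winding number, conjugated
into `o i ⟶ o j` by the paths from `o 0`; functoriality is then additivity of `winding`. -/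
def toFunctor (L : Loop G n) : ZMod n ⥤ G where
  obj := L.o
  map {i j} f := Groupoid.inv (L.fromZero i) ≫ (End.of L.total ^ winding f) ≫ L.fromZero j
  map_id i := by
    rw [winding_id, zpow_zero]
    show _ ≫ 𝟙 _ ≫ _ = _
    rw [Category.id_comp, Groupoid.inv_comp]
  map_comp {i j k} f g := by
    rw [winding_comp, add_comm, zpow_add, End.mul_def]
    simp

lemma toFunctor_map_of_val_eq (L : Loop G n) {i j : ZMod n} (f : i ⟶ j) (k : ℕ)
    (hk : f.1 = k) :
    L.toFunctor.map f = L.path i k ≫ eqToHom (congrArg L.o (add_eq_of_val_eq f k hk)) := by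
  have hdiv : (i.val + k) / n * n + j.val = i.val + k := by
    rw [val_eq_mod_of_val_eq f k hk, Nat.div_add_mod']
  have hj : (0 : ZMod n) + (i.val + k : ℕ) = j := by
    rw [← add_eq_of_val_eq f k hk]; simp
  have winding_side : (End.of L.total ^ winding f) ≫ L.fromZero j =
      L.path 0 (i.val + k) ≫ eqToHom (congrArg L.o hj) := by
    rw [winding_of_val_eq f k hk, zpow_natCast, L.path_length_congr 0 hdiv.symm,
      path_zero_mul_add, fromZero]
    simp
  have path_side : L.fromZero i ≫ L.path i k ≫ eqToHom (congrArg L.o (add_eq_of_val_eq f k hk)) =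
      L.path 0 (i.val + k) ≫ eqToHom (congrArg L.o hj) := by
    rw [path_add, L.path_congr (show (0 : ZMod n) + i.val = i by simp) k, fromZero]
    simp
  show Groupoid.inv _ ≫ _ ≫ _ = _
  rw [Groupoid.inv_eq_inv, IsIso.inv_comp_eq, winding_side, path_side]

lemma toFunctor_map_xi (L : Loop G n) (i : ZMod n) : L.toFunctor.map (xi n i) = L.x i := by
  rw [L.toFunctor_map_of_val_eq (xi n i) 1 rfl, path, path,
    L.x_congr (show i = i + (0 : ℕ) by simp)]
  simp only [Category.assoc, eqToHom_trans, eqToHom_trans_assoc, eqToHom_refl, Category.id_comp,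
    Category.comp_id]
  rfl

def toHom {S : OrientedTStruct G} (L : Loop G n) (hL : IsPosLoop S L) :
    OrientedTHom (XnTStruct n) S where
  F := L.toFunctor
  mapP f hf := by
    rw [L.toFunctor_map_of_val_eq f f.1.toNat (Int.toNat_of_nonneg hf).symm]
    exact S.P_comp _ _ (L.P_path S hL.1 _ _) (S.P_eqToHom _)
  mapT {i j} f hf := by
    obtain ⟨rfl, hf0⟩ := hf
    have hw : winding f ≠ 0 := by
      rw [Ne, winding_eq_iff]
      simpa [eq_comm] using hf0
    exact S.T_conj _ _ (S.T_pow (End.of L.total) _ hw hL.2)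

lemma toFunctor_ofFunctor (F : ZMod n ⥤ G) : (ofFunctor F).toFunctor = F := by
  have map_eq : ∀ {i j : ZMod n} (f : i ⟶ j), 0 ≤ f.1 →
      (ofFunctor F).toFunctor.map f = F.map f := fun f hf => by
    rw [toFunctor_map_of_val_eq _ f _ (Int.toNat_of_nonneg hf).symm,
      map_of_val_eq F f _ (Int.toNat_of_nonneg hf).symm]
  refine Functor.hext (fun _ => rfl) (fun i j f => heq_of_eq ?_)
  rcases le_total 0 f.1 with hf | hf
  · exact map_eq f hf
  · have map_inv_eq := map_eq (Groupoid.inv f) (neg_nonneg.2 hf)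
    have inv_map (H : ZMod n ⥤ G) : H.map f ≫ H.map (Groupoid.inv f) = 𝟙 _ := by
      rw [← H.map_comp, Groupoid.comp_inv, H.map_id]
    have h : (ofFunctor F).toFunctor.map f ≫ F.map (Groupoid.inv f) = 𝟙 _ := by
      rw [← map_inv_eq]; exact inv_map _
    exact (cancel_mono (F.map (Groupoid.inv f))).1 (h.trans (inv_map F).symm)

lemma ofFunctor_toFunctor (L : Loop G n) : ofFunctor L.toFunctor = L := by
  obtain ⟨o, x⟩ := L
  exact congrArg (Loop.mk o) (funext (toFunctor_map_xi ⟨o, x⟩))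

end Loop

lemma OrientedTHom.isPosLoop_ofFunctor {G : Type*} [Groupoid G] {S : OrientedTStruct G}
    {n : ℕ} [NeZero n] (F : OrientedTHom (XnTStruct n) S) : IsPosLoop S (Loop.ofFunctor F.F) :=
  ⟨fun i => F.mapP (xi n i) zero_le_one, by
    rw [Loop.total_ofFunctor]
    exact F.mapT _ ⟨rfl, Int.natCast_ne_zero.2 (NeZero.ne n)⟩⟩

/-- For a partially oriented groupoid `G` with non-triviality predicate
and `n ≥ 1`, the map sending a homomorphism `F : X_n → G` to the loop
`(F ξ_0, …, F ξ_{n-1})` is a bijection from the set of homomorphisms `X_n → G` onto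
the set of positive non-trivial `n`-loops in `G`. -/
theorem stmt7 {G : Type*} [Groupoid G] (S : OrientedTStruct G) (n : ℕ) (hn : 1 ≤ n) :
    Set.BijOn
      (fun F : OrientedTHom (XnTStruct n) S =>
        ({ o := fun i => F.F.obj i, x := fun i => F.F.map (xi n i) } : Loop G n))
      Set.univ
      {L : Loop G n | IsPosLoop S L} := by
  have : NeZero n := ⟨by omega⟩
  refine ⟨fun F _ => F.isPosLoop_ofFunctor, fun F _ F' _ h => OrientedTHom.ext ?_,
    fun L hL => ⟨L.toHom hL, trivial, L.ofFunctor_toFunctor⟩⟩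
  rw [← Loop.toFunctor_ofFunctor F.F, ← Loop.toFunctor_ofFunctor F'.F]
  exact congrArg Loop.toFunctor h
end

section
/- In any model of the cyclic theory T_C, given an elementary cycle of length n with objects o_i and arrows x_i : o_i → o_{i+1} (i ∈ ℤ/nℤ), and given any object c, there exist an index i ∈ ℤ/nℤ and arrows α : o_i → c and β : c → o_{i+1} with P(α), P(β) and β ∘ α = x_i. -/
/-!
Pick a minimal positive `φ : o₀ ⟶ c` with a positive `g : c ⟶ o₀` such that `g ∘ φ = C`, and let
`sⱼ = xⱼ₋₁ ∘ ⋯ ∘ x₀` be the partial composites of the cycle. The arrows `φ ∘ sⱼ⁻¹ : oⱼ ⟶ c` start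
positive at `j = 0`, and at `j = n` (where `sₙ = C`) their inverse is `g`, which is positive.
Since every arrow or its inverse is positive, there is a crossing: some `j` with
`φ ∘ sⱼ⁻¹` and `sⱼ₊₁ ∘ φ⁻¹` both positive, and their composite is `sⱼ₊₁ ∘ sⱼ⁻¹ = xⱼ`.
-/

open CategoryTheory

/-- A model of the cyclic theory `T_C`: a groupoid with a totally-oriented positivity
predicate `P`, distinguished cycles `C a : a ⟶ a` which are positive, non-identical
and stable under rotation, with positive arrows between any two objects, and such
that every positive arrow factors as a minimal positive arrow after a power of the
cycle at its domain. -/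
structure CyclicModel (G : Type*) [Groupoid G] where
  P : ∀ {a b : G}, (a ⟶ b) → Prop
  C : ∀ a : G, a ⟶ a
  P_id : ∀ a : G, P (𝟙 a)
  P_comp : ∀ {a b c : G} (f : a ⟶ b) (g : b ⟶ c), P f → P g → P (f ≫ g)
  P_antisym : ∀ {a b : G} (f : a ⟶ b), P f → P (Groupoid.inv f) →
    ∃ h : a = b, f = eqToHom h
  P_total : ∀ {a b : G} (f : a ⟶ b), P f ∨ P (Groupoid.inv f)
  P_C : ∀ a : G, P (C a)
  C_ne_id : ∀ a : G, C a ≠ 𝟙 a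
  C_rot : ∀ {a b : G} (f : a ⟶ b) (g : b ⟶ a), f ≫ g = C a → g ≫ f = C b
  hom_nonempty : ∀ a b : G, ∃ f : a ⟶ b, P f
  factor : ∀ {a b : G} (f : a ⟶ b), P f →
    ∃ (k : ℕ) (α : a ⟶ b), (P α ∧ ∃ g : b ⟶ a, P g ∧ α ≫ g = C a) ∧
      f = ((C a ^ k : CategoryTheory.End a)) ≫ α

/-- `α : a ⟶ b` is a minimal positive arrow: `α` is positive and some positive
`g : b ⟶ a` satisfies `g ∘ α = C a`. -/
def CyclicModel.PMin {G : Type*} [Groupoid G] (M : CyclicModel G) {a b : G}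
    (α : a ⟶ b) : Prop :=
  M.P α ∧ ∃ g : b ⟶ a, M.P g ∧ α ≫ g = M.C a

/-- A loop is an elementary cycle when all its arrows are positive and its total
composite is the distinguished cycle at its base point. -/
def CyclicModel.IsCycle {G : Type*} [Groupoid G] (M : CyclicModel G) {n : ℕ}
    (L : Loop G n) : Prop :=
  (∀ i, M.P (L.x i)) ∧ L.total = M.C (L.o 0)

theorem Nat.exists_lt_and_succ_of_forall_or {Q R : ℕ → Prop} (hQR : ∀ j, Q j ∨ R j)
    (h0 : Q 0) : ∀ {n : ℕ}, 1 ≤ n → R n → ∃ j < n, Q j ∧ R (j + 1)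
  | 1, _, hR => ⟨0, one_pos, h0, hR⟩
  | n + 2, _, hR =>
    (hQR (n + 1)).elim (fun hQ => ⟨n + 1, by omega, hQ, hR⟩) fun hR' =>
      have ⟨j, hj, hQj, hRj⟩ := Nat.exists_lt_and_succ_of_forall_or hQR h0 n.succ_pos hR'
      ⟨j, by omega, hQj, hRj⟩

namespace CyclicModel

variable {G : Type*} [Groupoid G] (M : CyclicModel G)

theorem P_eqToHom {a b : G} (h : a = b) : M.P (eqToHom h) := by
  subst h
  exact M.P_id a

theorem exists_PMin (a b : G) : ∃ α : a ⟶ b, M.PMin α := by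
  obtain ⟨f, hf⟩ := M.hom_nonempty a b
  obtain ⟨-, α, hα, -⟩ := M.factor f hf
  exact ⟨α, hα⟩

theorem exists_P_inv_comp_and_P_inv_comp_succ {p : ℕ → G} {c : G} (s : ∀ j, p 0 ⟶ p j)
    (hs : s 0 = 𝟙 (p 0)) (φ : p 0 ⟶ c) (hφ : M.P φ) {n : ℕ} (hn : 1 ≤ n)
    (hφn : M.P (Groupoid.inv φ ≫ s n)) :
    ∃ j < n, M.P (Groupoid.inv (s j) ≫ φ) ∧ M.P (Groupoid.inv φ ≫ s (j + 1)) := by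
  refine Nat.exists_lt_and_succ_of_forall_or (Q := fun j => M.P (Groupoid.inv (s j) ≫ φ))
    (R := fun j => M.P (Groupoid.inv φ ≫ s j)) (fun j => ?_) (by simpa [hs] using hφ) hn hφn
  simpa [Groupoid.inv_eq_inv] using M.P_total (Groupoid.inv (s j) ≫ φ)

end CyclicModel

theorem Loop.seg_succ {G : Type*} [Groupoid G] {n : ℕ} (L : Loop G n) (s d : ℕ) :
    L.seg s (d + 1) = L.seg s d ≫ L.x ((s + d : ℕ) : ZMod n) ≫
      eqToHom (congrArg L.o (by push_cast; ring)) :=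
  rfl

theorem CyclicModel.IsCycle.seg_zero_eq_C {G : Type*} [Groupoid G] {M : CyclicModel G} {n : ℕ}
    {L : Loop G n} (hL : M.IsCycle L) :
    L.seg 0 n = eqToHom (congrArg L.o Nat.cast_zero) ≫ M.C (L.o 0) ≫
      eqToHom (congrArg L.o (by simp)) := by
  rw [← hL.2, Loop.total]
  simp

theorem stmt10_general {G : Type*} [Groupoid G] (M : CyclicModel G) {n : ℕ}
    (hn : 1 ≤ n) (L : Loop G n) (hL : M.IsCycle L) (c : G) :
    ∃ (i : ZMod n) (α : L.o i ⟶ c) (β : c ⟶ L.o (i + 1)),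
      M.P α ∧ M.P β ∧ α ≫ β = L.x i := by
  obtain ⟨φ, hφ, g, hg, hφg⟩ := M.exists_PMin (L.o 0) c
  have h0 : L.o ((0 : ℕ) : ZMod n) = L.o 0 := congrArg L.o Nat.cast_zero
  have hgφ : Groupoid.inv (eqToHom h0 ≫ φ) ≫ L.seg 0 n = g ≫ eqToHom (by simp) := by
    simp [hL.seg_zero_eq_C, ← hφg, Groupoid.inv_eq_inv]
  obtain ⟨j, -, hα, hβ⟩ := M.exists_P_inv_comp_and_P_inv_comp_succ
    (p := fun j => L.o ((0 + j : ℕ) : ZMod n)) (L.seg 0) rfl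
    (eqToHom h0 ≫ φ) (M.P_comp _ _ (M.P_eqToHom h0) hφ) hn
    (hgφ ▸ M.P_comp _ _ hg (M.P_eqToHom _))
  refine ⟨((0 + j : ℕ) : ZMod n), _, _ ≫ eqToHom (congrArg L.o (by push_cast; ring)), hα,
    M.P_comp _ _ hβ (M.P_eqToHom _), ?_⟩
  simp [Loop.seg_succ, Groupoid.inv_eq_inv]

/-- In any model of the cyclic theory `T_C`, given an elementary cycle
of length `n` and any object `c`, some arrow `x_i` of the cycle factors as
`β ∘ α` with `α : o_i ⟶ c` and `β : c ⟶ o_{i+1}` both positive. -/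
theorem stmt10 {G : Type*} [Groupoid G] [Nonempty G] (M : CyclicModel G) {n : ℕ}
    (hn : 1 ≤ n) (L : Loop G n) (hL : M.IsCycle L) (c : G) :
    ∃ (i : ZMod n) (α : L.o i ⟶ c) (β : c ⟶ L.o (i + 1)),
      M.P α ∧ M.P β ∧ α ≫ β = L.x i :=
  stmt10_general M hn L hL c
end
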